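/- arXiv:1803.09631 — 6 statements merged into one kernel-verified Lean document; each statement's English description precedes it below -/
import Mathlib

section
/- For any matrix Φ ∈ R^{m×n} and any s-sparse vector x̄ ∈ R^n, x̄ is the unique minimizer of ‖x‖₀ subject to Φx = Φx̄ for every s-sparse x̄ if and only if spark(Φ) > 2s. -/
open Finset

/-- ℓ⁰ "norm": the number of nonzero entries of a vector. -/
noncomputable def l0 {k : ℕ} (x : Fin k → ℝ) : ℕ :=
  (Finset.univ.filter (fun i => x i ≠ 0)).card

/-- ℓ¹ norm of a vector. -/
noncomputable def l1 {k : ℕ} (x : Fin k → ℝ) : ℝ := ∑ i, |x i|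

/-- The spark of a matrix: the smallest number of linearly dependent columns
(`⊤` if the columns are linearly independent). -/
noncomputable def spark {m n : ℕ} (Φ : Matrix (Fin m) (Fin n) ℝ) : ℕ∞ :=
  sInf {k : ℕ∞ | ∃ η : Fin n → ℝ, η ≠ 0 ∧ Φ.mulVec η = 0 ∧ k = (l0 η : ℕ∞)}

lemma l0_sub_le {k : ℕ} (x y : Fin k → ℝ) : l0 (x - y) ≤ l0 x + l0 y := by
  unfold l0
  calc (univ.filter (fun i => (x - y) i ≠ 0)).card
      ≤ (univ.filter (fun i => x i ≠ 0) ∪ univ.filter (fun i => y i ≠ 0)).card := by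
        apply card_le_card
        intro i hi
        simp only [mem_filter, mem_union, mem_univ, true_and, Pi.sub_apply] at *
        by_contra h
        push_neg at h
        exact hi (by rw [h.1, h.2]; ring)
    _ ≤ _ := card_union_le _ _

theorem stmt3 {m n : ℕ} (Φ : Matrix (Fin m) (Fin n) ℝ) (s : ℕ) :
    (∀ xb : Fin n → ℝ, l0 xb ≤ s →
        ∀ x : Fin n → ℝ, Φ.mulVec x = Φ.mulVec xb → x ≠ xb → l0 xb < l0 x) ↔
      (2 * s : ℕ∞) < spark Φ := by
  constructor
  · intro H
    have : (2 * s : ℕ∞) + 1 ≤ spark Φ := by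
      apply le_sInf
      rintro k ⟨η, hη, hker, rfl⟩
      have : 2 * s < l0 η := by
        by_contra hle
        push_neg at hle
        set T := univ.filter (fun i => η i ≠ 0) with hT
        have hTcard : T.card = l0 η := rfl
        obtain ⟨A, hAT, hAcard⟩ :=
          Finset.exists_subset_card_eq (min_le_right s T.card)
        set x : Fin n → ℝ := fun i => if i ∈ A then η i else 0 with hx
        set xb : Fin n → ℝ := fun i => if i ∈ T \ A then -η i else 0 with hxb
        have hsub : x - xb = η := by
          funext i
          simp only [Pi.sub_apply, hx, hxb]
          by_cases hiA : i ∈ A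
          · have : i ∉ T \ A := fun h => (Finset.mem_sdiff.1 h).2 hiA
            simp [hiA, this]
          · by_cases hiT : i ∈ T
            · simp [hiA, Finset.mem_sdiff.2 ⟨hiT, hiA⟩]
            · have : η i = 0 := by
                by_contra h
                exact hiT (by simp [hT, h])
              simp [hiA, this, fun h : i ∈ T \ A => hiT (Finset.mem_sdiff.1 h).1]
        have hl0x : l0 x ≤ s := by
          have : univ.filter (fun i => x i ≠ 0) ⊆ A := by
            intro i hi
            simp only [mem_filter, mem_univ, true_and, hx] at hi
            by_contra h
            simp [h] at hi
          calc l0 x ≤ A.card := card_le_card this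
            _ ≤ s := hAcard ▸ min_le_left _ _
        have hl0xb : l0 xb ≤ s := by
          have hsubset : univ.filter (fun i => xb i ≠ 0) ⊆ T \ A := by
            intro i hi
            simp only [mem_filter, mem_univ, true_and, hxb] at hi
            by_contra h
            simp [h] at hi
          have : (T \ A).card ≤ s := by
            rw [Finset.card_sdiff_of_subset hAT, hAcard]
            omega
          exact le_trans (card_le_card hsubset) this
        have hne : x ≠ xb := by
          intro h
          exact hη (by rw [← hsub, h, sub_self])
        have hΦ : Φ.mulVec x = Φ.mulVec xb := by
          have := Matrix.mulVec_sub Φ x xb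
          rw [hsub, hker] at this
          exact sub_eq_zero.1 this.symm
        have h1 := H xb hl0xb x hΦ hne
        have h2 := H x hl0x xb hΦ.symm (Ne.symm hne)
        omega
      exact_mod_cast Nat.succ_le_of_lt this
    have key : (2 * s : ℕ∞) ≠ ⊤ := by
      intro hh
      rw [show ((2 : ℕ∞) * s) = ((2 * s : ℕ) : ℕ∞) by push_cast; ring] at hh
      exact (ENat.coe_ne_top _) hh
    exact lt_of_lt_of_le ((ENat.lt_add_one_iff key).2 le_rfl) this
  · intro h xb hxb x hΦ hne
    have hη : x - xb ≠ 0 := sub_ne_zero.2 hne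
    have hker : Φ.mulVec (x - xb) = 0 := by
      rw [Matrix.mulVec_sub, hΦ, sub_self]
    have hmem : ((l0 (x - xb) : ℕ∞)) ∈
        {k : ℕ∞ | ∃ η : Fin n → ℝ, η ≠ 0 ∧ Φ.mulVec η = 0 ∧ k = (l0 η : ℕ∞)} :=
      ⟨x - xb, hη, hker, rfl⟩
    have hlt : (2 * s : ℕ∞) < (l0 (x - xb) : ℕ∞) := lt_of_lt_of_le h (sInf_le hmem)
    have hlt' : 2 * s < l0 (x - xb) := by exact_mod_cast hlt
    have := l0_sub_le x xb
    omega
end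

section
/- A matrix Φ ∈ R^{m×n} satisfies the nullspace property of order s if and only if max over index sets S with |S| ≤ s of the maximum of ‖η_S‖₁ over η in the intersection of the nullspace of Φ with the closed unit ℓ¹-ball is strictly less than 1/2. -/
open Finset

theorem stmt4 {m n : ℕ} (Φ : Matrix (Fin m) (Fin n) ℝ) (s : ℕ) :
    (∀ η : Fin n → ℝ, Φ.mulVec η = 0 → η ≠ 0 →
        ∀ S : Finset (Fin n), S.Nonempty → S.card ≤ s →
          ∑ i ∈ S, |η i| < ∑ i ∈ Sᶜ, |η i|) ↔
      ∀ S : Finset (Fin n), S.card ≤ s →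
        ∀ η : Fin n → ℝ, Φ.mulVec η = 0 → l1 η ≤ 1 →
          ∑ i ∈ S, |η i| < 1 / 2 := by
  constructor
  · intro h S hS η hη hl1
    rcases eq_or_ne η 0 with rfl | hne
    · simp
    rcases S.eq_empty_or_nonempty with rfl | hSne
    · simp
    have key := h η hη hne S hSne hS
    have hsum : ∑ i ∈ S, |η i| + ∑ i ∈ Sᶜ, |η i| = l1 η := by
      rw [l1, Finset.sum_add_sum_compl]
    linarith
  · intro h η hη hne S hSne hS
    have hc : 0 < l1 η := by
      obtain ⟨i, hi⟩ := Function.ne_iff.mp hne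
      refine Finset.sum_pos' (fun j _ => abs_nonneg _) ⟨i, Finset.mem_univ i, ?_⟩
      simpa using hi
    set c := l1 η with hcdef
    have h2 := h S hS (c⁻¹ • η) ?_ ?_
    · have hS' : ∑ i ∈ S, |η i| < c / 2 := by
        have : ∑ i ∈ S, |(c⁻¹ • η) i| = c⁻¹ * ∑ i ∈ S, |η i| := by
          rw [Finset.mul_sum]
          refine Finset.sum_congr rfl fun i _ => ?_
          rw [Pi.smul_apply, smul_eq_mul, abs_mul, abs_of_nonneg (by positivity)]
        rw [this] at h2
        have h3 := mul_lt_mul_of_pos_left h2 hc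
        rw [← mul_assoc, mul_inv_cancel₀ hc.ne', one_mul] at h3
        linarith
      have hsum : ∑ i ∈ S, |η i| + ∑ i ∈ Sᶜ, |η i| = c := by
        rw [hcdef, l1, Finset.sum_add_sum_compl]
      linarith
    · rw [Matrix.mulVec_smul, hη, smul_zero]
    · have : l1 (c⁻¹ • η) = c⁻¹ * l1 η := by
        rw [l1, l1, Finset.mul_sum]
        refine Finset.sum_congr rfl fun i _ => ?_
        rw [Pi.smul_apply, smul_eq_mul, abs_mul, abs_of_nonneg (by positivity)]
      rw [this, ← hcdef, inv_mul_cancel₀ hc.ne']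
end

section
/- If Φ ∈ R^{m×n} has rank r, then every extreme point of the intersection of the nullspace of Φ with the closed unit ℓ¹-ball in R^n is at most (r+1)-sparse. -/
open Finset

theorem stmt5 {m n : ℕ} (Φ : Matrix (Fin m) (Fin n) ℝ) :
    ∀ z ∈ Set.extremePoints ℝ {x : Fin n → ℝ | Φ.mulVec x = 0 ∧ l1 x ≤ 1},
      l0 z ≤ Φ.rank + 1 := by
  rintro z ⟨⟨hz0, hz1⟩, hext⟩
  by_contra hcard
  push_neg at hcard
  set S : Finset (Fin n) := Finset.univ.filter (fun i => z i ≠ 0) with hSdef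
  have hcard' : Φ.rank + 1 < S.card := hcard
  -- extension by zero linear map
  let e : ({i // i ∈ S} → ℝ) →ₗ[ℝ] (Fin n → ℝ) :=
    { toFun := fun x i => if h : i ∈ S then x ⟨i, h⟩ else 0
      map_add' := by intro a b; funext i; by_cases h : i ∈ S <;> simp [h]
      map_smul' := by intro c a; funext i; by_cases h : i ∈ S <;> simp [h] }
  -- sign functional
  let f : (Fin n → ℝ) →ₗ[ℝ] ℝ :=
    { toFun := fun x => ∑ i, Real.sign (z i) * x i
      map_add' := by intro a b; simp [mul_add, Finset.sum_add_distrib]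
      map_smul' := by
        intro c a; simp [Finset.mul_sum]; congr 1; funext i; ring
    }
  -- domain finrank
  have hdom : Module.finrank ℝ ({i // i ∈ S} → ℝ) = S.card := by
    rw [Module.finrank_fintype_fun_eq_card, Fintype.card_coe]
  let g := Φ.mulVecLin.comp e
  let h := f.comp e
  have hkerg : S.card ≤ Module.finrank ℝ (LinearMap.ker g) + Φ.rank := by
    have h2 := LinearMap.finrank_range_add_finrank_ker g
    rw [hdom] at h2
    have hr : Module.finrank ℝ (LinearMap.range g) ≤ Φ.rank :=
      Submodule.finrank_mono (LinearMap.range_comp_le_range _ _)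
    omega
  let h' := h.domRestrict (LinearMap.ker g)
  have hkerh' : LinearMap.ker h' ≠ ⊥ := by
    intro hb
    have h2 := LinearMap.finrank_range_add_finrank_ker h'
    rw [hb, finrank_bot, add_zero] at h2
    have h1 : Module.finrank ℝ (LinearMap.range h') ≤ 1 := by
      simpa using Submodule.finrank_le (LinearMap.range h')
    omega
  obtain ⟨η'', hη''mem, hη''ne⟩ := Submodule.exists_mem_ne_zero_of_ne_bot hkerh'
  set η' : {i // i ∈ S} → ℝ := η''.1 with hη'def
  have hη'ne : η' ≠ 0 := by
    intro hz; exact hη''ne (Subtype.ext hz)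
  set η := e η' with hηdef
  have hηne : η ≠ 0 := by
    intro hzz
    apply hη'ne
    funext j
    have : η j.1 = 0 := by rw [hzz]; rfl
    simpa [hηdef, e, j.2] using this
  have hΦη : Φ.mulVec η = 0 := η''.2
  have hfη : f η = 0 := hη''mem
  have hηsupp : ∀ i, i ∉ S → η i = 0 := by
    intro i hi; simp [hηdef, e, hi]
  -- choose t
  have hSne : S.Nonempty := by
    rw [← Finset.card_pos]; omega
  set c : ℝ := S.inf' hSne (fun i => |z i|) with hcdef
  have hcpos : 0 < c := by
    rw [hcdef]
    apply Finset.lt_inf'_iff hSne |>.mpr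
    intro i hi
    have : z i ≠ 0 := by simpa [hSdef] using hi
    exact abs_pos.mpr this
  set B : ℝ := Finset.univ.sup' (Finset.univ_nonempty_iff.mpr ⟨hSne.choose⟩) (fun i => |η i|) with hBdef
  have hBle : ∀ i, |η i| ≤ B := by
    intro i
    rw [hBdef]
    exact Finset.le_sup' (fun j => |η j|) (Finset.mem_univ i)
  have hBnonneg : 0 ≤ B := le_trans (abs_nonneg (η hSne.choose)) (hBle hSne.choose)
  set t : ℝ := c / (B + 1) with htdef
  have htpos : 0 < t := div_pos hcpos (by linarith)
  have hkey : ∀ i ∈ S, |t * η i| < |z i| := by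
    intro i hi
    have h1 : |η i| ≤ B := hBle i
    have h2 : c ≤ |z i| := Finset.inf'_le _ hi
    have : t * |η i| < c := by
      calc t * |η i| ≤ t * B := by nlinarith
        _ < t * (B + 1) := by nlinarith
        _ = c := by rw [htdef]; field_simp
    calc |t * η i| = t * |η i| := by rw [abs_mul, abs_of_pos htpos]
      _ < c := this
      _ ≤ |z i| := h2
  -- pointwise abs identity
  have habs : ∀ (s : ℝ), s = 1 ∨ s = -1 → ∀ i, |z i + s * t * η i| = |z i| + s * t * Real.sign (z i) * η i := by
    intro s hs i
    by_cases hi : i ∈ S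
    · have hk := hkey i hi
      rcases lt_trichotomy (z i) 0 with hneg | hzero | hpos
      · rw [Real.sign_of_neg hneg]
        have hst : |s * t * η i| = |t * η i| := by
          rcases hs with h | h <;> simp [h, abs_mul]
        have h1 : z i + s * t * η i < 0 := by
          have := neg_abs_le (s * t * η i)
          have := abs_le.mp (le_of_lt (hst ▸ (hst ▸ hk)))
          rcases abs_lt.mp (hst ▸ hk) with ⟨ha, hb⟩
          have : |z i| = -z i := abs_of_neg hneg
          linarith [hb, this ▸ hb]
        rw [abs_of_neg h1, abs_of_neg hneg]; ring
      · exfalso; simp [hSdef, hzero] at hi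
      · rw [Real.sign_of_pos hpos]
        have hst : |s * t * η i| = |t * η i| := by
          rcases hs with h | h <;> simp [h, abs_mul]
        have h1 : 0 < z i + s * t * η i := by
          rcases abs_lt.mp (hst ▸ hk) with ⟨ha, hb⟩
          have : |z i| = z i := abs_of_pos hpos
          linarith [this ▸ ha]
        rw [abs_of_pos h1, abs_of_pos hpos]; ring
    · have hz : z i = 0 := by
        by_contra h; exact hi (by simp [hSdef, h])
      have hη0 : η i = 0 := hηsupp i hi
      simp [hz, hη0]
  -- the two points
  have hmem : ∀ (s : ℝ), s = 1 ∨ s = -1 → (z + (s * t) • η) ∈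
      {x : Fin n → ℝ | Φ.mulVec x = 0 ∧ l1 x ≤ 1} := by
    intro s hs
    constructor
    · rw [Matrix.mulVec_add, Matrix.mulVec_smul, hz0, hΦη, smul_zero, add_zero]
    · have : l1 (z + (s * t) • η) = l1 z + s * t * f η := by
        simp only [l1]
        have : ∀ i, |(z + (s * t) • η) i| = |z i| + s * t * Real.sign (z i) * η i := by
          intro i
          have := habs s hs i
          simpa [mul_assoc] using this
        rw [Finset.sum_congr rfl (fun i _ => this i)]
        rw [Finset.sum_add_distrib]
        congr 1
        simp only [f, LinearMap.coe_mk, AddHom.coe_mk, Finset.mul_sum]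
        congr 1; funext i; ring
      rw [this, hfη, mul_zero, add_zero]; exact hz1
  have hx := hmem 1 (Or.inl rfl)
  have hy := hmem (-1) (Or.inr rfl)
  simp only [one_mul, neg_one_mul, neg_smul] at hx hy
  have hseg : z ∈ openSegment ℝ (z + t • η) (z + -(t • η)) := by
    refine ⟨1/2, 1/2, by norm_num, by norm_num, by norm_num, ?_⟩
    funext i
    simp [Pi.add_apply, Pi.smul_apply, Pi.neg_apply]
    ring
  have := hext hx hy hseg
  have : t • η = 0 := by
    have h := congrArg (fun w => w - z) this
    simpa using h
  exact hηne (by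
    have := smul_eq_zero.mp this
    rcases this with h | h
    · exact absurd h (ne_of_gt htpos)
    · exact h)
end

section
/- For a vector x̄ ∈ R^n with support contained in an index set S, x̄ is the unique minimizer of ‖x‖₁ subject to Φx = Φx̄ for every such x̄ if and only if ‖η_S‖₁ < ‖η_{S^c}‖₁ for every nonzero η in the nullspace of Φ. -/
open Finset

theorem stmt6 {m n : ℕ} (Φ : Matrix (Fin m) (Fin n) ℝ)
    (S : Finset (Fin n)) (hS : S.Nonempty) :
    (∀ xb : Fin n → ℝ, (∀ i, xb i ≠ 0 → i ∈ S) →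
        ∀ x : Fin n → ℝ, Φ.mulVec x = Φ.mulVec xb → x ≠ xb → l1 xb < l1 x) ↔
      ∀ η : Fin n → ℝ, Φ.mulVec η = 0 → η ≠ 0 →
        ∑ i ∈ S, |η i| < ∑ i ∈ Sᶜ, |η i| := by
  constructor
  · intro h η hker hne
    set xb : Fin n → ℝ := fun i => if i ∈ S then η i else 0 with hxb
    set x : Fin n → ℝ := xb - η with hx
    have hsupp : ∀ i, xb i ≠ 0 → i ∈ S := by
      intro i hi
      by_contra hiS
      simp [hxb, hiS] at hi
    have hΦ : Φ.mulVec x = Φ.mulVec xb := by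
      rw [hx, Matrix.mulVec_sub, hker, sub_zero]
    have hxne : x ≠ xb := by
      intro hxx
      apply hne
      have : xb - η = xb := hxx
      funext i
      have := congrFun this i
      simpa [sub_eq_self] using this
    have := h xb hsupp x hΦ hxne
    have h1 : l1 xb = ∑ i ∈ S, |η i| := by
      rw [l1, ← Finset.sum_subset (Finset.subset_univ S)]
      · exact Finset.sum_congr rfl (fun i hi => by simp [hxb, hi])
      · intro i _ hi; simp [hxb, hi]
    have h2 : l1 x = ∑ i ∈ Sᶜ, |x i| := by
      rw [l1, ← Finset.sum_subset (Finset.subset_univ Sᶜ)]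
      intro i _ hi
      simp only [Finset.mem_compl, not_not] at hi
      simp [hx, hxb, hi]
    have h3 : ∑ i ∈ Sᶜ, |x i| = ∑ i ∈ Sᶜ, |η i| := by
      apply Finset.sum_congr rfl
      intro i hi
      simp only [Finset.mem_compl] at hi
      simp [hx, hxb, hi]
    rw [h1, h2, h3] at this
    exact this
  · intro h xb hsupp x hΦ hxne
    set η : Fin n → ℝ := x - xb with hη
    have hker : Φ.mulVec η = 0 := by
      rw [hη, Matrix.mulVec_sub, hΦ, sub_self]
    have hne : η ≠ 0 := sub_ne_zero_of_ne hxne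
    have key := h η hker hne
    have split1 : l1 x = ∑ i ∈ S, |x i| + ∑ i ∈ Sᶜ, |x i| :=
      (Finset.sum_add_sum_compl S _).symm
    have split2 : l1 xb = ∑ i ∈ S, |xb i| + ∑ i ∈ Sᶜ, |xb i| :=
      (Finset.sum_add_sum_compl S _).symm
    have hxbc : ∀ i ∈ Sᶜ, |xb i| = 0 := by
      intro i hi
      simp only [Finset.mem_compl] at hi
      have : xb i = 0 := by
        by_contra hc; exact hi (hsupp i hc)
      simp [this]
    have hxc : ∀ i ∈ Sᶜ, |x i| = |η i| := by
      intro i hi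
      have : xb i = 0 := by
        simp only [Finset.mem_compl] at hi
        by_contra hc; exact hi (hsupp i hc)
      simp [hη, this]
    have hbound : ∀ i ∈ S, |xb i| - |η i| ≤ |x i| := by
      intro i _
      have : x i = xb i + η i := by simp [hη]
      rw [this]
      have h4 := abs_sub_abs_le_abs_sub (xb i) (-(η i))
      rw [sub_neg_eq_add, abs_neg] at h4
      linarith
    have hsum : ∑ i ∈ S, (|xb i| - |η i|) ≤ ∑ i ∈ S, |x i| :=
      Finset.sum_le_sum hbound
    rw [Finset.sum_sub_distrib] at hsum
    rw [split1, split2, Finset.sum_congr rfl hxc, Finset.sum_congr rfl hxbc]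
    simp only [Finset.sum_const_zero, add_zero]
    linarith
end

section
/- The spark of the incidence matrix of a simple connected directed graph equals the girth of the graph (the length of its shortest simple cycle), with spark = +∞ for acyclic graphs. -/
open Finset

/-- A simple directed graph on `m` vertices with `n` edges: no self loops and at
most one edge between any two vertices. -/
structure DiGraph (m n : ℕ) where
  src : Fin n → Fin m
  tgt : Fin n → Fin m
  loopless : ∀ j, src j ≠ tgt j
  simple : ∀ j k : Fin n, ({src j, tgt j} : Finset (Fin m)) = {src k, tgt k} → j = k

/-- The incidence matrix of a directed graph. -/
noncomputable def inc {m n : ℕ} (G : DiGraph m n) : Matrix (Fin m) (Fin n) ℝ :=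
  fun i j => if G.tgt j = i then 1 else if G.src j = i then -1 else 0

/-- The underlying undirected simple graph. -/
def toSG {m n : ℕ} (G : DiGraph m n) : SimpleGraph (Fin m) where
  Adj u v := u ≠ v ∧ ∃ j, (G.src j = u ∧ G.tgt j = v) ∨ (G.src j = v ∧ G.tgt j = u)
  symm := ⟨fun u v h => ⟨h.1.symm, h.2.elim fun j hj => ⟨j, hj.symm⟩⟩⟩
  loopless := ⟨fun u h => h.1 rfl⟩

/-- `u 0, u 1, …, u (r-1), u 0` is a simple cycle of length `r` in the underlying
undirected graph of `G`. -/
def IsSimpleCycle {m n : ℕ} (G : DiGraph m n) (r : ℕ) (u : ℕ → Fin m) : Prop :=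
  3 ≤ r ∧ (∀ i < r, ∀ j < r, u i = u j → i = j) ∧
    ∀ i < r, ∃ j, (G.src j = u i ∧ G.tgt j = u ((i + 1) % r)) ∨
      (G.src j = u ((i + 1) % r) ∧ G.tgt j = u i)

/-- The signed indicator vector `w(C)` of a simple cycle. -/
noncomputable def cycVec {m n : ℕ} (G : DiGraph m n) (r : ℕ) (u : ℕ → Fin m) : Fin n → ℝ :=
  fun j => ∑ i ∈ Finset.range r,
    ((if G.src j = u i ∧ G.tgt j = u ((i + 1) % r) then (1 : ℝ) else 0) -
     (if G.src j = u ((i + 1) % r) ∧ G.tgt j = u i then (1 : ℝ) else 0))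

/-- The girth of (the underlying undirected graph of) `G`: the length of the
shortest simple cycle, `⊤` if `G` is acyclic. -/
noncomputable def dgirth {m n : ℕ} (G : DiGraph m n) : ℕ∞ :=
  sInf {r : ℕ∞ | ∃ (k : ℕ) (u : ℕ → Fin m), IsSimpleCycle G k u ∧ r = (k : ℕ∞)}

/-- The set of normalized simple cycle vectors `w(C)/‖w(C)‖₁`. -/
noncomputable def W1 {m n : ℕ} (G : DiGraph m n) : Set (Fin n → ℝ) :=
  {z | ∃ r u, IsSimpleCycle G r u ∧ z = (l1 (cycVec G r u))⁻¹ • cycVec G r u}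

section AuxProof
def Mtch {m n : ℕ} (G : DiGraph m n) (r : ℕ) (u : ℕ → Fin m) (j : Fin n) (i : ℕ) : Prop :=
  (G.src j = u i ∧ G.tgt j = u ((i + 1) % r)) ∨ (G.src j = u ((i + 1) % r) ∧ G.tgt j = u i)

lemma mod1_contra {r i : ℕ} (hr : 3 ≤ r) (hi : i < r) (h : (i + 1) % r = i) : False := by
  rcases Nat.lt_or_ge (i + 1) r with h' | h'
  · rw [Nat.mod_eq_of_lt h'] at h; omega
  · have hb : i + 1 = r := by omega
    rw [hb, Nat.mod_self] at h; omega

lemma mod2_contra {r i : ℕ} (hr : 3 ≤ r) (hi : i < r) (h : (i + 2) % r = i) : False := by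
  rcases Nat.lt_or_ge (i + 2) r with h' | h'
  · rw [Nat.mod_eq_of_lt h'] at h; omega
  · rw [Nat.mod_eq_sub_mod h', Nat.mod_eq_of_lt (by omega)] at h; omega

section
variable {m n : ℕ} {G : DiGraph m n} {r : ℕ} {u : ℕ → Fin m}

lemma succ_ne (hc : IsSimpleCycle G r u) {i : ℕ} (hi : i < r) : u ((i + 1) % r) ≠ u i := by
  intro h
  exact mod1_contra hc.1 hi (hc.2.1 _ (Nat.mod_lt _ (by omega)) _ hi h)

lemma match_unique (hc : IsSimpleCycle G r u) {j : Fin n} {i i' : ℕ} (hi : i < r) (hi' : i' < r)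
    (h1 : Mtch G r u j i) (h2 : Mtch G r u j i') : i = i' := by
  obtain ⟨hr, hinj, -⟩ := hc
  have hrpos : 0 < r := by omega
  rcases h1 with ⟨a1, b1⟩ | ⟨a1, b1⟩ <;> rcases h2 with ⟨a2, b2⟩ | ⟨a2, b2⟩
  · exact hinj _ hi _ hi' (a1.symm.trans a2)
  · exfalso
    have e1 : i = (i' + 1) % r := hinj _ hi _ (Nat.mod_lt _ hrpos) (a1.symm.trans a2)
    have e2 : (i + 1) % r = i' := hinj _ (Nat.mod_lt _ hrpos) _ hi' (b1.symm.trans b2)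
    rw [← e2, Nat.mod_add_mod] at e1
    exact mod2_contra hr hi e1.symm
  · exfalso
    have e1 : (i + 1) % r = i' := hinj _ (Nat.mod_lt _ hrpos) _ hi' (a1.symm.trans a2)
    have e2 : i = (i' + 1) % r := hinj _ hi _ (Nat.mod_lt _ hrpos) (b1.symm.trans b2)
    rw [← e1, Nat.mod_add_mod] at e2
    exact mod2_contra hr hi e2.symm
  · exact hinj _ hi _ hi' (b1.symm.trans b2)

lemma cycVec_eq_zero {j : Fin n} (h : ∀ i < r, ¬ Mtch G r u j i) : cycVec G r u j = 0 := by
  unfold cycVec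
  apply Finset.sum_eq_zero
  intro i hi
  rw [Finset.mem_range] at hi
  have hn := h i hi
  rw [if_neg (fun hx => hn (Or.inl hx)), if_neg (fun hx => hn (Or.inr hx)), sub_zero]

lemma cycVec_of_match (hc : IsSimpleCycle G r u) {j : Fin n} {i : ℕ} (hi : i < r)
    (hm : Mtch G r u j i) : cycVec G r u j = 1 ∨ cycVec G r u j = -1 := by
  unfold cycVec
  rw [Finset.sum_eq_single_of_mem i (Finset.mem_range.2 hi)]
  · rcases hm with ⟨hs, ht⟩ | ⟨hs, ht⟩
    · left
      have hneg : ¬ (G.src j = u ((i + 1) % r) ∧ G.tgt j = u i) := by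
        rintro ⟨hs', ht'⟩
        exact succ_ne hc hi (hs'.symm.trans hs)
      rw [if_pos ⟨hs, ht⟩, if_neg hneg, sub_zero]
    · right
      have hneg : ¬ (G.src j = u i ∧ G.tgt j = u ((i + 1) % r)) := by
        rintro ⟨hs', ht'⟩
        exact succ_ne hc hi (hs.symm.trans hs')
      rw [if_neg hneg, if_pos ⟨hs, ht⟩, zero_sub]
  · intro b hb hbne
    rw [Finset.mem_range] at hb
    have h1 : ¬ (G.src j = u b ∧ G.tgt j = u ((b + 1) % r)) := by
      intro hb'
      exact hbne (match_unique hc hb hi (Or.inl hb') hm)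
    have h2 : ¬ (G.src j = u ((b + 1) % r) ∧ G.tgt j = u b) := by
      intro hb'
      exact hbne (match_unique hc hb hi (Or.inr hb') hm)
    rw [if_neg h1, if_neg h2, sub_zero]

lemma cycVec_ne_zero (hc : IsSimpleCycle G r u) : cycVec G r u ≠ 0 := by
  have hr3 := hc.1
  obtain ⟨j, hj⟩ := hc.2.2 0 (by omega)
  intro h
  have h0 : cycVec G r u j = 0 := congrFun h j
  rcases cycVec_of_match hc (show 0 < r by omega) hj with h' | h' <;>
    rw [h0] at h' <;> norm_num at h'

lemma l0_cycVec_le (hc : IsSimpleCycle G r u) : l0 (cycVec G r u) ≤ r := by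
  classical
  have key : ∀ j ∈ Finset.univ.filter (fun j => cycVec G r u j ≠ 0), ∃ i, i < r ∧ Mtch G r u j i := by
    intro j hj
    rw [Finset.mem_filter] at hj
    by_contra h
    push_neg at h
    exact hj.2 (cycVec_eq_zero (fun i hi => h i hi))
  calc l0 (cycVec G r u) ≤ (Finset.range r).card := by
        apply Finset.card_le_card_of_injOn (fun j => if h : ∃ i, i < r ∧ Mtch G r u j i then h.choose else 0)
        · intro j hj
          have h := key j hj
          simp only [dif_pos h]
          exact Finset.mem_range.2 h.choose_spec.1
        · intro j hj j' hj' heq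
          have h := key j (Finset.mem_coe.1 hj)
          have h' := key j' (Finset.mem_coe.1 hj')
          simp only [dif_pos h, dif_pos h'] at heq
          obtain ⟨hi1, hm1⟩ := h.choose_spec
          obtain ⟨hi2, hm2⟩ := h'.choose_spec
          rw [heq] at hm1
          apply G.simple
          have p1 : ({G.src j, G.tgt j} : Finset (Fin m)) = {u (h'.choose), u ((h'.choose + 1) % r)} := by
            rcases hm1 with ⟨hs, ht⟩ | ⟨hs, ht⟩
            · rw [hs, ht]
            · rw [hs, ht, Finset.pair_comm]
          have p2 : ({G.src j', G.tgt j'} : Finset (Fin m)) = {u (h'.choose), u ((h'.choose + 1) % r)} := by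
            rcases hm2 with ⟨hs, ht⟩ | ⟨hs, ht⟩
            · rw [hs, ht]
            · rw [hs, ht, Finset.pair_comm]
          rw [p1, p2]
    _ = r := Finset.card_range r

lemma cycle_reindex (hr : 0 < r) (F : ℕ → ℝ) :
    ∑ i ∈ Finset.range r, F ((i + 1) % r) = ∑ i ∈ Finset.range r, F i := by
  apply Finset.sum_nbij' (i := fun a => (a + 1) % r) (j := fun b => (b + (r - 1)) % r)
  · intro a ha
    exact Finset.mem_range.2 (Nat.mod_lt _ hr)
  · intro a ha
    exact Finset.mem_range.2 (Nat.mod_lt _ hr)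
  · intro a ha
    rw [Finset.mem_range] at ha
    rw [Nat.mod_add_mod]
    have h1 : a + 1 + (r - 1) = a + r := by omega
    rw [h1, Nat.add_mod_right, Nat.mod_eq_of_lt ha]
  · intro a ha
    rw [Finset.mem_range] at ha
    rw [Nat.mod_add_mod]
    have h1 : a + (r - 1) + 1 = a + r := by omega
    rw [h1, Nat.add_mod_right, Nat.mod_eq_of_lt ha]
  · intro a ha
    rfl

lemma mulVec_cycVec (hc : IsSimpleCycle G r u) : (inc G).mulVec (cycVec G r u) = 0 := by
  classical
  have hr3 := hc.1
  funext v
  simp only [Matrix.mulVec, dotProduct, Pi.zero_apply]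
  set F : ℕ → ℝ := fun k => if u k = v then (1:ℝ) else 0 with hF
  have pairj : ∀ i (jj : Fin n), Mtch G r u jj i →
      ({G.src jj, G.tgt jj} : Finset (Fin m)) = {u i, u ((i + 1) % r)} := by
    rintro i jj (⟨hs, ht⟩ | ⟨hs, ht⟩)
    · rw [hs, ht]
    · rw [hs, ht, Finset.pair_comm]
  have inner : ∀ i ∈ Finset.range r,
      (∑ j, inc G v j * ((if G.src j = u i ∧ G.tgt j = u ((i + 1) % r) then (1:ℝ) else 0) -
        (if G.src j = u ((i + 1) % r) ∧ G.tgt j = u i then (1:ℝ) else 0)))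
        = F ((i + 1) % r) - F i := by
    intro i hi
    rw [Finset.mem_range] at hi
    obtain ⟨j0, hj0⟩ := hc.2.2 i hi
    have hne : u ((i + 1) % r) ≠ u i := succ_ne hc hi
    have side : ∀ b ∈ (Finset.univ : Finset (Fin n)), b ≠ j0 →
        inc G v b * ((if G.src b = u i ∧ G.tgt b = u ((i + 1) % r) then (1:ℝ) else 0) -
          (if G.src b = u ((i + 1) % r) ∧ G.tgt b = u i then (1:ℝ) else 0)) = 0 := by
      intro b _ hbne
      have h1 : ¬ (G.src b = u i ∧ G.tgt b = u ((i + 1) % r)) := fun hx =>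
        hbne (G.simple b j0 ((pairj i b (Or.inl hx)).trans (pairj i j0 hj0).symm))
      have h2 : ¬ (G.src b = u ((i + 1) % r) ∧ G.tgt b = u i) := fun hx =>
        hbne (G.simple b j0 ((pairj i b (Or.inr hx)).trans (pairj i j0 hj0).symm))
      rw [if_neg h1, if_neg h2, sub_zero, mul_zero]
    rw [Finset.sum_eq_single_of_mem j0 (Finset.mem_univ j0) side]
    rcases hj0 with ⟨hs, ht⟩ | ⟨hs, ht⟩
    · have hneg : ¬ (G.src j0 = u ((i + 1) % r) ∧ G.tgt j0 = u i) := by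
        rintro ⟨hs', ht'⟩
        exact hne (hs'.symm.trans hs)
      rw [if_pos ⟨hs, ht⟩, if_neg hneg, sub_zero, mul_one]
      simp only [inc, hs, ht, hF]
      split_ifs with a1 a2 <;> simp_all
    · have hneg : ¬ (G.src j0 = u i ∧ G.tgt j0 = u ((i + 1) % r)) := by
        rintro ⟨hs', ht'⟩
        exact hne (hs.symm.trans hs')
      rw [if_neg hneg, if_pos ⟨hs, ht⟩, zero_sub, mul_neg, mul_one]
      simp only [inc, hs, ht, hF]
      split_ifs with a1 a2 <;> simp_all
  calc (∑ j, inc G v j * cycVec G r u j)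
      = ∑ j, ∑ i ∈ Finset.range r,
          inc G v j * ((if G.src j = u i ∧ G.tgt j = u ((i + 1) % r) then (1:ℝ) else 0) -
            (if G.src j = u ((i + 1) % r) ∧ G.tgt j = u i then (1:ℝ) else 0)) := by
        apply Finset.sum_congr rfl
        intro j _
        rw [cycVec, Finset.mul_sum]
    _ = ∑ i ∈ Finset.range r, ∑ j,
          inc G v j * ((if G.src j = u i ∧ G.tgt j = u ((i + 1) % r) then (1:ℝ) else 0) -
            (if G.src j = u ((i + 1) % r) ∧ G.tgt j = u i then (1:ℝ) else 0)) :=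
        Finset.sum_comm
    _ = ∑ i ∈ Finset.range r, (F ((i + 1) % r) - F i) := Finset.sum_congr rfl inner
    _ = 0 := by
        rw [Finset.sum_sub_distrib, cycle_reindex (by omega) F, sub_self]
end

section
variable {m n : ℕ} (G : DiGraph m n) (η : Fin n → ℝ)

def otherV (p : Fin m × Fin n) : Fin m := if G.src p.2 = p.1 then G.tgt p.2 else G.src p.2

noncomputable def stepP (p : Fin m × Fin n) : Fin m × Fin n :=
  if h : ∃ e', e' ≠ p.2 ∧ η e' ≠ 0 ∧ (G.src e' = otherV G p ∨ G.tgt e' = otherV G p)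
  then (otherV G p, h.choose) else p

def goodP (p : Fin m × Fin n) : Prop := η p.2 ≠ 0 ∧ (G.src p.2 = p.1 ∨ G.tgt p.2 = p.1)

lemma exists_other_edge (hη : (inc G).mulVec η = 0) (e : Fin n) (he : η e ≠ 0) (v : Fin m)
    (hv : G.src e = v ∨ G.tgt e = v) :
    ∃ e', e' ≠ e ∧ η e' ≠ 0 ∧ (G.src e' = v ∨ G.tgt e' = v) := by
  by_contra hcon
  push_neg at hcon
  have hv0 : (inc G).mulVec η v = 0 := congrFun hη v
  have key : ∑ j, inc G v j * η j = 0 := by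
    simpa [Matrix.mulVec, dotProduct] using hv0
  have side : ∀ b ∈ (Finset.univ : Finset (Fin n)), b ≠ e → inc G v b * η b = 0 := by
    intro b _ hbne
    by_cases hb : η b = 0
    · rw [hb, mul_zero]
    · have h := hcon b hbne hb
      have : inc G v b = 0 := by
        simp only [inc]
        rw [if_neg h.2, if_neg h.1]
      rw [this, zero_mul]
  rw [Finset.sum_eq_single_of_mem e (Finset.mem_univ e) side] at key
  have hinc : inc G v e ≠ 0 := by
    have hl := G.loopless e
    simp only [inc]
    split_ifs with h1 h2 <;> norm_num
    rcases hv with h | h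
    · exact h2 h
    · exact h1 h
  rcases mul_eq_zero.1 key with h | h
  · exact hinc h
  · exact he h

lemma stepP_spec (hη : (inc G).mulVec η = 0) (p : Fin m × Fin n) (hp : goodP G η p) :
    goodP G η (stepP G η p) ∧ (stepP G η p).2 ≠ p.2 ∧
    ((G.src p.2 = p.1 ∧ G.tgt p.2 = (stepP G η p).1) ∨
     (G.src p.2 = (stepP G η p).1 ∧ G.tgt p.2 = p.1)) := by
  have hw : (G.src p.2 = p.1 ∧ G.tgt p.2 = otherV G p) ∨
      (G.src p.2 = otherV G p ∧ G.tgt p.2 = p.1) := by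
    rw [otherV]
    by_cases hsp : G.src p.2 = p.1
    · rw [if_pos hsp]; exact Or.inl ⟨hsp, rfl⟩
    · rw [if_neg hsp]; exact Or.inr ⟨rfl, hp.2.resolve_left hsp⟩
  have hincid : G.src p.2 = otherV G p ∨ G.tgt p.2 = otherV G p := by
    rcases hw with ⟨_, h⟩ | ⟨h, _⟩
    · exact Or.inr h
    · exact Or.inl h
  have hEx : ∃ e', e' ≠ p.2 ∧ η e' ≠ 0 ∧ (G.src e' = otherV G p ∨ G.tgt e' = otherV G p) :=
    exists_other_edge G η hη p.2 hp.1 _ hincid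
  obtain ⟨hne', hη', hinc'⟩ := hEx.choose_spec
  simp only [stepP, dif_pos hEx]
  exact ⟨⟨hη', hinc'⟩, hne', hw⟩

end

lemma exists_cycle_of_kernel {m n : ℕ} (G : DiGraph m n) (η : Fin n → ℝ)
    (hη : (inc G).mulVec η = 0) (hne : η ≠ 0) :
    ∃ r w, IsSimpleCycle G r w ∧ r ≤ l0 η := by
  classical
  obtain ⟨e0, he0⟩ : ∃ j, η j ≠ 0 := by
    by_contra hq
    push_neg at hq
    exact hne (funext hq)
  set p0 : Fin m × Fin n := (G.src e0, e0) with hp0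
  set U : ℕ → Fin m := fun k => ((stepP G η)^[k] p0).1 with hUdef
  set E : ℕ → Fin n := fun k => ((stepP G η)^[k] p0).2 with hEdef
  have hgood : ∀ k, goodP G η ((stepP G η)^[k] p0) := by
    intro k
    induction k with
    | zero => exact ⟨he0, Or.inl rfl⟩
    | succ k ih =>
        rw [Function.iterate_succ_apply']
        exact (stepP_spec G η hη _ ih).1
  have hsupp : ∀ k, η (E k) ≠ 0 := fun k => (hgood k).1
  have hconn : ∀ k, (G.src (E k) = U k ∧ G.tgt (E k) = U (k+1)) ∨
      (G.src (E k) = U (k+1) ∧ G.tgt (E k) = U k) := by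
    intro k
    have h := (stepP_spec G η hη _ (hgood k)).2.2
    simp only [hUdef, hEdef, Function.iterate_succ_apply']
    exact h
  have hdiff : ∀ k, E (k+1) ≠ E k := by
    intro k
    have h := (stepP_spec G η hη _ (hgood k)).2.1
    simp only [hEdef, Function.iterate_succ_apply']
    exact h
  have pairE : ∀ k, ({G.src (E k), G.tgt (E k)} : Finset (Fin m)) = {U k, U (k+1)} := by
    intro k
    rcases hconn k with ⟨hs, ht⟩ | ⟨hs, ht⟩
    · rw [hs, ht]
    · rw [hs, ht, Finset.pair_comm]
  -- pigeonhole
  have hrep : ∃ b, ∃ a, a < b ∧ U a = U b := by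
    obtain ⟨x, y, hxy, hUxy⟩ :=
      Fintype.exists_ne_map_eq_of_card_lt (fun i : Fin (m+1) => U i.val) (by simp)
    rcases Ne.lt_or_gt hxy with h | h
    · exact ⟨y.val, x.val, h, hUxy⟩
    · exact ⟨x.val, y.val, h, hUxy.symm⟩
  set j0 := Nat.find hrep with hj0def
  obtain ⟨i0, hi0lt, hU0⟩ := Nat.find_spec hrep
  rw [← hj0def] at hi0lt hU0
  have distinct : ∀ x y, x < y → y < j0 → U x ≠ U y := by
    intro x y hxy hy h
    exact Nat.find_min hrep hy ⟨x, hxy, h⟩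
  set r := j0 - i0 with hrdef
  have hne1 : j0 ≠ i0 + 1 := by
    intro h
    rw [h] at hU0
    rcases hconn i0 with ⟨hs, ht⟩ | ⟨hs, ht⟩
    · exact G.loopless (E i0) (hs.trans (hU0.trans ht.symm))
    · exact G.loopless (E i0) (hs.trans (hU0.symm.trans ht.symm))
  have hne2 : j0 ≠ i0 + 2 := by
    intro h
    rw [h] at hU0
    have p1 := pairE i0
    have p2 := pairE (i0 + 1)
    rw [show i0 + 1 + 1 = i0 + 2 from rfl, ← hU0] at p2
    have hps : ({G.src (E (i0+1)), G.tgt (E (i0+1))} : Finset (Fin m)) =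
        {G.src (E i0), G.tgt (E i0)} := by
      rw [p1, p2, Finset.pair_comm]
    exact hdiff i0 (G.simple (E (i0+1)) (E i0) hps)
  have hr3 : 3 ≤ r := by omega
  have uniq : ∀ a b, a < b → b ≤ j0 → U a = U b → a = i0 ∧ b = j0 := by
    intro a b hab hbj hUab
    have hb : b = j0 := by
      rcases Nat.lt_or_ge b j0 with h | h
      · exact absurd hUab (distinct a b hab h)
      · omega
    subst hb
    refine ⟨?_, rfl⟩
    rcases lt_trichotomy a i0 with h | h | h
    · exact absurd (hUab.trans hU0.symm) (distinct a i0 h hi0lt)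
    · exact h
    · exact absurd (hU0.trans hUab.symm) (distinct i0 a h hab)
  set W : ℕ → Fin m := fun k => U (i0 + k) with hWdef
  have hcyc : IsSimpleCycle G r W := by
    refine ⟨hr3, ?_, ?_⟩
    · intro x hx y hy hxy
      rcases lt_trichotomy x y with h | h | h
      · exact absurd hxy (distinct (i0+x) (i0+y) (by omega) (by omega))
      · exact h
      · exact absurd hxy.symm (distinct (i0+y) (i0+x) (by omega) (by omega))
    · intro k hk
      refine ⟨E (i0 + k), ?_⟩
      have key : U (i0 + k + 1) = W ((k + 1) % r) := by
        rcases Nat.lt_or_ge (k+1) r with h | h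
        · rw [Nat.mod_eq_of_lt h]
          simp only [hWdef]
          rw [show i0 + (k + 1) = i0 + k + 1 from rfl]
        · have hk1 : k + 1 = r := by omega
          rw [hk1, Nat.mod_self]
          simp only [hWdef, Nat.add_zero]
          have hj : i0 + k + 1 = j0 := by omega
          rw [hj, ← hU0]
      have hWk : W k = U (i0 + k) := rfl
      rw [← key, hWk]
      exact hconn (i0 + k)
  have main : ∀ x y, x < y → y < r → E (i0 + x) ≠ E (i0 + y) := by
    intro x y hxy hy hE
    have p1 := pairE (i0 + x)
    have p2 := pairE (i0 + y)
    rw [hE] at p1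
    have hq := p2.symm.trans p1
    have hxmem : U (i0+x) ∈ ({U (i0+y), U (i0+y+1)} : Finset (Fin m)) := by
      rw [hq]
      simp
    rw [Finset.mem_insert, Finset.mem_singleton] at hxmem
    rcases hxmem with h | h
    · exact distinct (i0+x) (i0+y) (by omega) (by omega) h
    · rcases Nat.lt_or_ge (y+1) r with hy1 | hy1
      · exact distinct (i0+x) (i0+y+1) (by omega) (by omega) h
      · have hy1' : y + 1 = r := by omega
        have hx0 : x = 0 := by
          have := (uniq (i0+x) (i0+y+1) (by omega) (by omega) h).1
          omega
        have hmem2 : U (i0+y) ∈ ({U (i0+x), U (i0+x+1)} : Finset (Fin m)) := by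
          rw [← hq]
          simp
        rw [Finset.mem_insert, Finset.mem_singleton] at hmem2
        rcases hmem2 with h2 | h2
        · exact distinct (i0+x) (i0+y) (by omega) (by omega) h2.symm
        · rcases Nat.lt_or_ge (i0+x+1) (i0+y) with h3 | h3
          · exact distinct (i0+x+1) (i0+y) h3 (by omega) h2.symm
          · omega
  have hcard : r ≤ l0 η := by
    have h := Finset.card_le_card_of_injOn (f := fun k => E (i0 + k))
      (s := Finset.range r) (t := Finset.univ.filter (fun j => η j ≠ 0))
      (fun k _ => Finset.mem_filter.2 ⟨Finset.mem_univ _, hsupp _⟩)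
      (by
        intro x hx y hy hxy
        simp only [Finset.coe_range, Set.mem_Iio] at hx hy
        rcases lt_trichotomy x y with h | h | h
        · exact absurd hxy (main x y h hy)
        · exact h
        · exact absurd hxy.symm (main y x h hx))
    rw [Finset.card_range] at h
    exact h
  exact ⟨r, W, hcyc, hcard⟩


theorem stmt9 {m n : ℕ} (G : DiGraph m n) (hconn : (toSG G).Connected) :
    spark (inc G) = dgirth G := by
  apply le_antisymm
  · apply le_sInf
    rintro b ⟨k, u, hcyc, rfl⟩
    calc spark (inc G) ≤ (l0 (cycVec G k u) : ℕ∞) :=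
          sInf_le ⟨cycVec G k u, cycVec_ne_zero hcyc, mulVec_cycVec hcyc, rfl⟩
      _ ≤ (k : ℕ∞) := by exact_mod_cast l0_cycVec_le hcyc
  · apply le_sInf
    rintro b ⟨η, hne, hη, rfl⟩
    obtain ⟨r, w, hc, hle⟩ := exists_cycle_of_kernel G η hη hne
    exact le_trans (sInf_le ⟨r, w, hc, rfl⟩) (by exact_mod_cast hle)


end AuxProof
end

section
/- Let A be the incidence matrix of a simple, connected directed graph G with girth g. Every s-sparse vector x̄ is the unique minimizer of ‖x‖₀ subject to Ax = Ax̄ if and only if s < g/2. -/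
open Finset

namespace Aux
variable {m n : ℕ} (G : DiGraph m n)
lemma edge_eq {j j' : Fin n} {a b : Fin m}
    (h : (G.src j = a ∧ G.tgt j = b) ∨ (G.src j = b ∧ G.tgt j = a))
    (h' : (G.src j' = a ∧ G.tgt j' = b) ∨ (G.src j' = b ∧ G.tgt j' = a)) : j = j' := by
  apply G.simple
  rcases h with ⟨h1,h2⟩|⟨h1,h2⟩ <;> rcases h' with ⟨h1',h2'⟩|⟨h1',h2'⟩ <;>
    rw [h1,h2,h1',h2'] <;> first | rfl | exact Finset.pair_comm _ _
lemma exists_other (η : Fin n → ℝ) (hker : (inc G).mulVec η = 0)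
    (j0 : Fin n) (h0 : η j0 ≠ 0) (v : Fin m) (hv : G.src j0 = v ∨ G.tgt j0 = v) :
    ∃ j1, j1 ≠ j0 ∧ η j1 ≠ 0 ∧ (G.src j1 = v ∨ G.tgt j1 = v) := by
  by_contra hc
  push_neg at hc
  have hrow : ∑ j, inc G v j * η j = 0 := by
    have := congrFun hker v
    simpa [Matrix.mulVec, dotProduct] using this
  have hsingle : ∑ j, inc G v j * η j = inc G v j0 * η j0 := by
    apply Finset.sum_eq_single_of_mem j0 (Finset.mem_univ _)
    intro j _ hj
    by_cases hη : η j = 0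
    · simp [hη]
    · have h2 := hc j hj hη
      simp [inc, h2.1, h2.2]
  rw [hsingle] at hrow
  rcases hv with h | h
  · have hne : G.tgt j0 ≠ v := fun ht => G.loopless j0 (h.trans ht.symm)
    simp [inc, h, hne] at hrow
    exact h0 hrow
  · simp [inc, h] at hrow
    exact h0 hrow

/-- An edge of a walk step: `j'` goes between `v` and some new vertex `w ≠ p`. -/
lemma exists_next (η : Fin n → ℝ) (hker : (inc G).mulVec η = 0)
    (p v : Fin m) (j : Fin n) (hj : η j ≠ 0)
    (hpv : (G.src j = p ∧ G.tgt j = v) ∨ (G.src j = v ∧ G.tgt j = p)) :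
    ∃ (w : Fin m) (j' : Fin n), η j' ≠ 0 ∧ w ≠ p ∧
      ((G.src j' = v ∧ G.tgt j' = w) ∨ (G.src j' = w ∧ G.tgt j' = v)) := by
  have hv : G.src j = v ∨ G.tgt j = v := by tauto
  obtain ⟨j1, hne, hη1, hv1⟩ := exists_other G η hker j hj v hv
  rcases hv1 with h | h
  · refine ⟨G.tgt j1, j1, hη1, ?_, Or.inl ⟨h, rfl⟩⟩
    intro hw
    exact hne (edge_eq G (Or.inl ⟨h, hw⟩)
      (by rcases hpv with ⟨h1,h2⟩|⟨h1,h2⟩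
          · exact Or.inr ⟨h1, h2⟩
          · exact Or.inl ⟨h1, h2⟩))
  · refine ⟨G.src j1, j1, hη1, ?_, Or.inr ⟨rfl, h⟩⟩
    intro hw
    exact hne (edge_eq G (Or.inr ⟨hw, h⟩)
      (by rcases hpv with ⟨h1,h2⟩|⟨h1,h2⟩
          · exact Or.inr ⟨h1, h2⟩
          · exact Or.inl ⟨h1, h2⟩))

/-- A non-backtracking walk in the support of a kernel vector. -/
lemma walk_exists (η : Fin n → ℝ) (hker : (inc G).mulVec η = 0) (hη : η ≠ 0) :
    ∃ (u : ℕ → Fin m) (e : ℕ → Fin n),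
      (∀ k, η (e k) ≠ 0) ∧
      (∀ k, (G.src (e k) = u k ∧ G.tgt (e k) = u (k+1)) ∨
            (G.src (e k) = u (k+1) ∧ G.tgt (e k) = u k)) ∧
      (∀ k, u (k+2) ≠ u k) := by
  obtain ⟨j0, hj0⟩ := Function.ne_iff.mp hη
  simp only [Pi.zero_apply] at hj0
  set Good : Fin m × Fin m × Fin n → Prop := fun st =>
    η st.2.2 ≠ 0 ∧ ((G.src st.2.2 = st.1 ∧ G.tgt st.2.2 = st.2.1) ∨
      (G.src st.2.2 = st.2.1 ∧ G.tgt st.2.2 = st.1)) with hGood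
  have step : ∀ st : {st // Good st}, ∃ st' : {st // Good st},
      st'.1.1 = st.1.2.1 ∧ st'.1.2.1 ≠ st.1.1 := by
    rintro ⟨⟨p, v, j⟩, hj, hpv⟩
    obtain ⟨w, j', hη', hwp, h'⟩ := exists_next G η hker p v j hj hpv
    exact ⟨⟨⟨v, w, j'⟩, hη', h'⟩, rfl, hwp⟩
  choose nxt h1 h2 using step
  let F : ℕ → {st // Good st} := fun k =>
    Nat.rec ⟨⟨G.src j0, G.tgt j0, j0⟩, hj0, Or.inl ⟨rfl, rfl⟩⟩ (fun _ st => nxt st) k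
  have hF : ∀ k, F (k+1) = nxt (F k) := fun _ => rfl
  have hcur : ∀ k, (F k).1.2.1 = (F (k+1)).1.1 := by
    intro k; rw [hF k]; exact (h1 (F k)).symm
  refine ⟨fun k => (F k).1.1, fun k => (F k).1.2.2, fun k => (F k).2.1, ?_, ?_⟩
  · intro k
    have := (F k).2.2
    rwa [hcur k] at this
  · intro k
    have := h2 (F k)
    rw [← hF k, hcur (k+1)] at this
    exact this


/-- `j` is an edge of the cycle at position `i`. -/
def Mth (r : ℕ) (u : ℕ → Fin m) (i : ℕ) (j : Fin n) : Prop :=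
  (G.src j = u i ∧ G.tgt j = u ((i + 1) % r)) ∨ (G.src j = u ((i + 1) % r) ∧ G.tgt j = u i)

lemma no_self {r i : ℕ} (hr : 3 ≤ r) (hi : i < r) (h : (i + 1) % r = i) : False := by
  rcases Nat.lt_or_ge (i+1) r with h' | h'
  · rw [Nat.mod_eq_of_lt h'] at h; omega
  · have : i + 1 = r := by omega
    rw [this, Nat.mod_self] at h; omega

lemma no_rev {r i i' : ℕ} (hr : 3 ≤ r) (hi : i < r) (hi' : i' < r)
    (h1 : (i + 1) % r = i') (h2 : (i' + 1) % r = i) : False := by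
  rcases Nat.lt_or_ge (i+1) r with h | h
  · rw [Nat.mod_eq_of_lt h] at h1
    subst h1
    rcases Nat.lt_or_ge (i+2) r with h' | h'
    · rw [Nat.mod_eq_of_lt (by omega : i + 1 + 1 < r)] at h2; omega
    · have he : i + 1 + 1 = r := by omega
      rw [he, Nat.mod_self] at h2; omega
  · have he : i + 1 = r := by omega
    rw [he, Nat.mod_self] at h1
    subst h1
    rw [Nat.mod_eq_of_lt (by omega)] at h2
    omega

lemma pos_unique {r : ℕ} {u : ℕ → Fin m} (hcyc : IsSimpleCycle G r u)
    {i i' : ℕ} (hi : i < r) (hi' : i' < r) {j : Fin n}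
    (h : Mth G r u i j) (h' : Mth G r u i' j) : i = i' := by
  obtain ⟨hr, inj, -⟩ := hcyc
  have hm : ∀ a, (a + 1) % r < r := fun a => Nat.mod_lt _ (by omega)
  rcases h with ⟨a1, a2⟩ | ⟨a1, a2⟩ <;> rcases h' with ⟨b1, b2⟩ | ⟨b1, b2⟩
  · exact inj i hi i' hi' (a1 ▸ b1)
  · exfalso
    have e1 : (i + 1) % r = i' := inj _ (hm i) i' hi' (a2 ▸ b2)
    have e2 : (i' + 1) % r = i := inj _ (hm i') i hi (b1 ▸ a1)
    exact no_rev hr hi hi' e1 e2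
  · exfalso
    have e1 : (i + 1) % r = i' := inj _ (hm i) i' hi' (a1 ▸ b1)
    have e2 : (i' + 1) % r = i := inj _ (hm i') i hi (b2 ▸ a2)
    exact no_rev hr hi hi' e1 e2
  · exact inj i hi i' hi' (a2 ▸ b2)

lemma not_both {r : ℕ} {u : ℕ → Fin m} (hcyc : IsSimpleCycle G r u)
    {i : ℕ} (hi : i < r) {j : Fin n}
    (hf : G.src j = u i ∧ G.tgt j = u ((i + 1) % r))
    (hb : G.src j = u ((i + 1) % r) ∧ G.tgt j = u i) : False := by
  obtain ⟨hr, inj, -⟩ := hcyc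
  have hm : (i + 1) % r < r := Nat.mod_lt _ (by omega)
  exact no_self hr hi (inj i hi _ hm (hf.1.symm.trans hb.1)).symm

/-- Any nonzero kernel vector of the incidence matrix supports a simple cycle. -/
lemma kernel_cycle (η : Fin n → ℝ) (hker : (inc G).mulVec η = 0) (hη : η ≠ 0) :
    ∃ (r : ℕ) (u : ℕ → Fin m), IsSimpleCycle G r u ∧
      ∀ i < r, ∃ j, η j ≠ 0 ∧ Mth G r u i j := by
  obtain ⟨u, e, hsupp, hedge, hnb⟩ := walk_exists G η hker hη
  have hadj : ∀ k, u (k+1) ≠ u k := by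
    intro k h
    rcases hedge k with ⟨h1, h2⟩ | ⟨h1, h2⟩ <;> exact G.loopless (e k) (by rw [h1, h2, h])
  -- pigeonhole
  have hP : ∃ c, ∃ b, b < c ∧ u b = u c := by
    obtain ⟨a, b, hab, he⟩ := Fintype.exists_ne_map_eq_of_card_lt
      (fun k : Fin (m+1) => u k) (by simp)
    rcases lt_or_gt_of_ne hab with h | h
    · exact ⟨b, a, h, he⟩
    · exact ⟨a, b, h, he.symm⟩
  classical
  set c := Nat.find hP with hc
  obtain ⟨b, hbc, hub⟩ := Nat.find_spec hP
  have hmin : ∀ c' < c, ¬ ∃ b', b' < c' ∧ u b' = u c' := fun c' h => Nat.find_min hP h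
  set r := c - b with hr
  set v : ℕ → Fin m := fun k => u (b + k) with hv
  have hr3 : 3 ≤ r := by
    have h1 : c ≠ b + 1 := fun h => hadj b (h ▸ hub.symm)
    have h2 : c ≠ b + 2 := fun h => hnb b (h ▸ hub.symm)
    omega
  have hinj : ∀ i < r, ∀ i' < r, v i = v i' → i = i' := by
    intro i hi i' hi' hvv
    by_contra hne
    rcases lt_or_gt_of_ne hne with h | h
    · exact hmin (b + i') (by omega) ⟨b + i, by omega, hvv⟩
    · exact hmin (b + i) (by omega) ⟨b + i', by omega, hvv.symm⟩
  have hM : ∀ i < r, ∃ j, η j ≠ 0 ∧ Mth G r v i j := by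
    intro i hi
    rcases Nat.lt_or_ge (i + 1) r with h | h
    · refine ⟨e (b + i), hsupp _, ?_⟩
      have hmod : (i + 1) % r = i + 1 := Nat.mod_eq_of_lt h
      have hB : b + (i + 1) % r = b + i + 1 := by omega
      simpa [Mth, hv, hB] using hedge (b + i)
    · have hie : i + 1 = r := by omega
      refine ⟨e (c - 1), hsupp _, ?_⟩
      have hA : b + (i + 1) % r = b := by rw [hie, Nat.mod_self]; omega
      have hbi : b + i = c - 1 := by omega
      have hc1 : c - 1 + 1 = c := by omega
      have := hedge (c - 1)
      rw [hc1, ← hub] at this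
      simpa [Mth, hv, hA, hbi] using this
  exact ⟨r, v, ⟨hr3, hinj, fun i hi =>
    ⟨(hM i hi).choose, (hM i hi).choose_spec.2⟩⟩, hM⟩

lemma mth_edge_eq {r : ℕ} {u : ℕ → Fin m} {i : ℕ} {j j' : Fin n}
    (h : Mth G r u i j) (h' : Mth G r u i j') : j = j' :=
  edge_eq G h h'

lemma cycVec_eq_zero {r : ℕ} {u : ℕ → Fin m} (j : Fin n)
    (h : ∀ i < r, ¬ Mth G r u i j) : cycVec G r u j = 0 := by
  apply Finset.sum_eq_zero
  intro i hi
  rw [Finset.mem_range] at hi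
  have h2 := h i hi
  rw [if_neg (fun hA => h2 (Or.inl hA)), if_neg (fun hB => h2 (Or.inr hB)), sub_zero]

lemma cycVec_eq_pm {r : ℕ} {u : ℕ → Fin m} (hcyc : IsSimpleCycle G r u)
    {i : ℕ} (hi : i < r) {j : Fin n} (hM : Mth G r u i j) :
    cycVec G r u j = 1 ∨ cycVec G r u j = -1 := by
  have hsum : cycVec G r u j =
      (if G.src j = u i ∧ G.tgt j = u ((i+1)%r) then (1:ℝ) else 0) -
      (if G.src j = u ((i+1)%r) ∧ G.tgt j = u i then (1:ℝ) else 0) := by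
    apply Finset.sum_eq_single_of_mem i (Finset.mem_range.mpr hi)
    intro i' hi' hne
    rw [Finset.mem_range] at hi'
    have hnm : ¬ Mth G r u i' j := fun hM' => hne (pos_unique G hcyc hi' hi hM' hM)
    rw [if_neg (fun hA => hnm (Or.inl hA)), if_neg (fun hB => hnm (Or.inr hB)), sub_zero]
  rcases hM with h | h
  · left; rw [hsum, if_pos h, if_neg (fun h' => not_both G hcyc hi h h'), sub_zero]
  · right; rw [hsum, if_neg (fun h' => not_both G hcyc hi h' h), if_pos h]; ring

lemma cycVec_ne_zero {r : ℕ} {u : ℕ → Fin m} (hcyc : IsSimpleCycle G r u) :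
    cycVec G r u ≠ 0 := by
  have hr : 3 ≤ r := hcyc.1
  obtain ⟨j, hj⟩ := hcyc.2.2 0 (by omega)
  have hM : Mth G r u 0 j := hj
  intro h0
  rcases cycVec_eq_pm G hcyc (show 0 < r by omega) hM with h | h <;>
    rw [h0] at h <;> simpa using h

lemma sum_shift (t : ℕ) (f : ℕ → ℝ) :
    ∑ i ∈ Finset.range (t+1), f ((i+1) % (t+1)) = ∑ i ∈ Finset.range (t+1), f i := by
  rw [Finset.sum_range_succ, Nat.mod_self, Finset.sum_range_succ' f]
  congr 1
  apply Finset.sum_congr rfl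
  intro i hi
  rw [Finset.mem_range] at hi
  rw [Nat.mod_eq_of_lt (by omega)]

lemma inc_apply_eq (j : Fin n) (a b : Fin m) (hs : G.src j = a) (ht : G.tgt j = b)
    (hab : a ≠ b) (v : Fin m) :
    inc G v j = (if b = v then (1:ℝ) else 0) - (if a = v then 1 else 0) := by
  by_cases h1 : b = v <;> by_cases h2 : a = v
  · exact absurd (h2.trans h1.symm) hab
  · simp [inc, hs, ht, h1, h2]
  · simp [inc, hs, ht, h1, h2]
  · simp [inc, hs, ht, h1, h2]

lemma mulVec_cycVec {r : ℕ} {u : ℕ → Fin m} (hcyc : IsSimpleCycle G r u) :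
    (inc G).mulVec (cycVec G r u) = 0 := by
  have hr : 3 ≤ r := hcyc.1
  have inj := hcyc.2.1
  funext v
  show ∑ j, inc G v j * cycVec G r u j = 0
  have key : ∀ i ∈ Finset.range r,
      (∑ j, inc G v j *
        ((if G.src j = u i ∧ G.tgt j = u ((i + 1) % r) then (1:ℝ) else 0) -
         (if G.src j = u ((i + 1) % r) ∧ G.tgt j = u i then (1:ℝ) else 0))) =
      (if u ((i+1) % r) = v then (1:ℝ) else 0) - (if u i = v then 1 else 0) := by
    intro i hi
    rw [Finset.mem_range] at hi
    obtain ⟨j0, hj0⟩ := hcyc.2.2 i hi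
    have hne : u i ≠ u ((i+1)%r) := by
      intro h
      exact no_self hr hi (inj i hi _ (Nat.mod_lt _ (by omega)) h).symm
    rw [Finset.sum_eq_single_of_mem j0 (Finset.mem_univ _)]
    · rcases hj0 with ⟨h1, h2⟩ | ⟨h1, h2⟩
      · have hnb : ¬(G.src j0 = u ((i+1)%r) ∧ G.tgt j0 = u i) :=
          fun h' => not_both G hcyc hi ⟨h1, h2⟩ h'
        rw [if_pos ⟨h1, h2⟩, if_neg hnb, sub_zero, mul_one]
        exact inc_apply_eq G j0 _ _ h1 h2 hne v
      · have hnf : ¬(G.src j0 = u i ∧ G.tgt j0 = u ((i+1)%r)) :=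
          fun h' => not_both G hcyc hi h' ⟨h1, h2⟩
        rw [if_neg hnf, if_pos ⟨h1, h2⟩, zero_sub, mul_neg, mul_one,
          inc_apply_eq G j0 _ _ h1 h2 (Ne.symm hne) v]
        ring
    · intro j _ hjne
      have hnf : ¬(G.src j = u i ∧ G.tgt j = u ((i+1)%r)) :=
        fun h' => hjne (edge_eq G (Or.inl h') hj0)
      have hnb : ¬(G.src j = u ((i+1)%r) ∧ G.tgt j = u i) :=
        fun h' => hjne (edge_eq G (Or.inr h') hj0)
      rw [if_neg hnf, if_neg hnb, sub_zero, mul_zero]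
  calc ∑ j, inc G v j * cycVec G r u j
      = ∑ i ∈ Finset.range r,
          (∑ j, inc G v j *
            ((if G.src j = u i ∧ G.tgt j = u ((i + 1) % r) then (1:ℝ) else 0) -
             (if G.src j = u ((i + 1) % r) ∧ G.tgt j = u i then (1:ℝ) else 0))) := by
        rw [Finset.sum_comm]
        apply Finset.sum_congr rfl
        intro j _
        rw [cycVec, Finset.mul_sum]
    _ = ∑ i ∈ Finset.range r,
          ((if u ((i+1) % r) = v then (1:ℝ) else 0) - (if u i = v then 1 else 0)) :=
        Finset.sum_congr rfl key
    _ = 0 := by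
        rw [Finset.sum_sub_distrib]
        obtain ⟨t, rfl⟩ : ∃ t, r = t + 1 := ⟨r - 1, by omega⟩
        rw [sum_shift t (fun k => if u k = v then (1:ℝ) else 0), sub_self]

lemma l0_cycVec_le {r : ℕ} {u : ℕ → Fin m} (hcyc : IsSimpleCycle G r u) :
    l0 (cycVec G r u) ≤ r := by
  classical
  set S := Finset.univ.filter (fun j => cycVec G r u j ≠ 0) with hS
  have hex : ∀ j ∈ S, ∃ i, i < r ∧ Mth G r u i j := by
    intro j hj
    rw [hS, Finset.mem_filter] at hj
    by_contra hc
    push_neg at hc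
    exact hj.2 (cycVec_eq_zero G j fun i hi hM => (hc i hi) hM)
  choose idx hidx1 hidx2 using hex
  have hcard : S.card ≤ (Finset.range r).card := by
    apply Finset.card_le_card_of_injOn (fun j => if hj : j ∈ S then idx j hj else 0)
    · intro j hj
      rw [Finset.mem_coe] at hj
      simp only [hj, dif_pos, Finset.mem_coe, Finset.mem_range]
      exact hidx1 j hj
    · intro j hj j' hj' he
      rw [Finset.mem_coe] at hj hj'
      simp only [hj, hj', dif_pos] at he
      exact edge_eq G (he ▸ hidx2 j hj) (hidx2 j' hj')
  rw [Finset.card_range] at hcard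
  exact hcard

lemma l0_kernel_ge (η : Fin n → ℝ) (hker : (inc G).mulVec η = 0) (hη : η ≠ 0)
    (g : ℕ) (hg : dgirth G = (g : ℕ∞)) : g ≤ l0 η := by
  classical
  obtain ⟨r, u, hcyc, hM⟩ := kernel_cycle G η hker hη
  have hgr : g ≤ r := by
    have h1 : dgirth G ≤ (r : ℕ∞) := sInf_le ⟨r, u, hcyc, rfl⟩
    rw [hg] at h1
    exact_mod_cast h1
  have hrl : r ≤ l0 η := by
    obtain ⟨jd, -, -⟩ := hM 0 (by have := hcyc.1; omega)
    have hex : ∀ i ∈ Finset.range r, ∃ j, η j ≠ 0 ∧ Mth G r u i j :=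
      fun i hi => hM i (Finset.mem_range.mp hi)
    choose ed hed1 hed2 using hex
    have hcard : (Finset.range r).card ≤ (Finset.univ.filter (fun j => η j ≠ 0)).card := by
      apply Finset.card_le_card_of_injOn (fun i => if hi : i ∈ Finset.range r then ed i hi else jd)
      · intro i hi
        rw [Finset.mem_coe] at hi
        simp only [hi, dif_pos, Finset.mem_coe, Finset.mem_filter]
        exact ⟨Finset.mem_univ _, hed1 i hi⟩
      · intro i hi i' hi' he
        rw [Finset.mem_coe] at hi hi'
        simp only [hi, hi', dif_pos] at he
        exact pos_unique G hcyc (Finset.mem_range.mp hi) (Finset.mem_range.mp hi')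
          (hed2 i hi) (he ▸ hed2 i' hi')
    rw [Finset.card_range] at hcard
    exact hcard.trans_eq rfl
  omega

lemma girth_attained (g : ℕ) (hg : dgirth G = (g : ℕ∞)) :
    ∃ u, IsSimpleCycle G g u := by
  classical
  set T : Set ℕ := {k : ℕ | ∃ u, IsSimpleCycle G k u} with hTdef
  have hne : {r : ℕ∞ | ∃ (k : ℕ) (u : ℕ → Fin m), IsSimpleCycle G k u ∧ r = (k : ℕ∞)}.Nonempty := by
    by_contra h
    rw [Set.not_nonempty_iff_eq_empty] at h
    rw [dgirth, h, sInf_empty] at hg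
    exact (WithTop.coe_ne_top) hg.symm
  obtain ⟨x, k, u, hk, rfl⟩ := hne
  have hT : T.Nonempty := ⟨k, u, hk⟩
  have hk0 := Nat.sInf_mem hT
  obtain ⟨u0, hu0⟩ := hk0
  have hle : dgirth G ≤ ((sInf T : ℕ) : ℕ∞) := sInf_le ⟨sInf T, u0, hu0, rfl⟩
  have hge : ((sInf T : ℕ) : ℕ∞) ≤ dgirth G := by
    apply le_sInf
    rintro r ⟨k', u', hk', rfl⟩
    exact_mod_cast Nat.sInf_le (show k' ∈ T from ⟨u', hk'⟩)
  rw [hg] at hle hge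
  have hgT : sInf T = g := by exact_mod_cast le_antisymm hge hle
  exact ⟨u0, hgT ▸ hu0⟩

lemma l0_sub_le {k : ℕ} (x y : Fin k → ℝ) : l0 (x - y) ≤ l0 x + l0 y := by
  classical
  rw [l0, l0, l0]
  refine le_trans (Finset.card_le_card ?_) (Finset.card_union_le _ _)
  intro i hi
  rw [Finset.mem_filter] at hi
  rw [Finset.mem_union, Finset.mem_filter, Finset.mem_filter]
  by_contra hc
  push_neg at hc
  have h1 := hc.1 (Finset.mem_univ i)
  have h2 := hc.2 (Finset.mem_univ i)
  apply hi.2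
  simp only [Pi.sub_apply, h1, h2, sub_zero]

end Aux


theorem stmt10 {m n : ℕ} (G : DiGraph m n) (hconn : (toSG G).Connected)
    (g : ℕ) (hg : dgirth G = (g : ℕ∞)) (s : ℕ) :
    (∀ xb : Fin n → ℝ, l0 xb ≤ s →
        ∀ x : Fin n → ℝ, (inc G).mulVec x = (inc G).mulVec xb → x ≠ xb →
          l0 xb < l0 x) ↔ 2 * s < g := by
  classical
  constructor
  · intro H
    by_contra hlt
    push_neg at hlt
    obtain ⟨u, hcyc⟩ := Aux.girth_attained G g hg
    set η := cycVec G g u with hη_def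
    have hker : (inc G).mulVec η = 0 := Aux.mulVec_cycVec G hcyc
    have hne0 : η ≠ 0 := Aux.cycVec_ne_zero G hcyc
    have hub : l0 η ≤ g := Aux.l0_cycVec_le G hcyc
    have hlb : g ≤ l0 η := Aux.l0_kernel_ge G η hker hne0 g hg
    set S := Finset.univ.filter (fun j => η j ≠ 0) with hSdef
    have hScard : S.card = g := le_antisymm hub hlb
    obtain ⟨T, hTS, hTcard⟩ := Finset.exists_subset_card_eq (show g - g / 2 ≤ S.card by omega)
    set xb : Fin n → ℝ := fun j => if j ∈ T then η j else 0 with hxb_def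
    set x : Fin n → ℝ := fun j => if j ∈ T then 0 else -η j with hx_def
    have hxbη : xb - η = x := by
      funext j
      by_cases hj : j ∈ T <;> simp [hxb_def, hx_def, hj]
    have hl0xb : l0 xb = T.card := by
      rw [l0]
      congr 1
      ext j
      simp only [Finset.mem_filter, Finset.mem_univ, true_and, hxb_def]
      constructor
      · intro h
        by_contra hj
        simp [hj] at h
      · intro hj
        have hjS : j ∈ S := hTS hj
        rw [hSdef, Finset.mem_filter] at hjS
        simpa [hj] using hjS.2
    have hl0x : l0 x = (S \ T).card := by
      rw [l0]
      congr 1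
      ext j
      simp only [Finset.mem_filter, Finset.mem_univ, true_and, Finset.mem_sdiff, hx_def, hSdef]
      constructor
      · intro h
        by_cases hj : j ∈ T
        · simp [hj] at h
        · simp only [hj, if_neg, ite_false, ne_eq, neg_eq_zero] at h
          exact ⟨h, hj⟩
      · rintro ⟨hjS, hjT⟩
        simp [hjT, hjS]
    have hAx : (inc G).mulVec x = (inc G).mulVec xb := by
      rw [← hxbη, Matrix.mulVec_sub, hker, sub_zero]
    have hxne : x ≠ xb := by
      intro h
      apply hne0
      have h2 : xb - η = xb := by rw [hxbη, h]
      exact sub_eq_self.mp h2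
    have hxb_s : l0 xb ≤ s := by rw [hl0xb, hTcard]; omega
    have hfin := H xb hxb_s x hAx hxne
    rw [hl0xb, hl0x, Finset.card_sdiff_of_subset hTS, hScard, hTcard] at hfin
    omega
  · intro hs xb hxb x hAx hne
    by_contra hnot
    push_neg at hnot
    have hd : x - xb ≠ 0 := sub_ne_zero.mpr hne
    have hker : (inc G).mulVec (x - xb) = 0 := by
      rw [Matrix.mulVec_sub, hAx, sub_self]
    have hgle : g ≤ l0 (x - xb) := Aux.l0_kernel_ge G _ hker hd g hg
    have hsub := Aux.l0_sub_le x xb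
    omega
end
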